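/- Let λ ∈ ℝ and let E : ℝ^d → ℝ be λ-convex, i.e. x ↦ E(x) − (λ/2)|x|² is convex, let 0 < T < ∞, u⁰ ∈ ℝ^d, and let ε > 0 satisfy 4 ε max(−λ, 0) < 1. If u, v ∈ C¹([0,T]; ℝ^d) with u(0) = v(0) = u⁰ both minimize the functional W^ε(w) = ∫_0^T e^{-t/ε} ( (ε/2)|w'(t)|² + E(w(t)) ) dt over all w ∈ C¹([0,T]; ℝ^d) with w(0) = u⁰, then u = v. -/

import Mathlib

/-! With `g = u - v`, λ-convexity of `E` and the parallelogram law give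
`W(½(u + v)) ≤ ½ W(u) + ½ W(v) - ⅛ (ε A + λ S)`, where `A` and `S` are the integrals of
`e^{-t/ε}|g'|²` and `e^{-t/ε}|g|²`; minimality of `u` and `v` then forces `ε A + λ S ≤ 0`.
Since `g(0) = 0`, integrating the derivative of `-ε e^{-t/ε}|g|²` and using `|g - 2εg'|² ≥ 0`
gives the weighted Hardy inequality `ε e^{-t/ε}|g(t)|² + S/2 ≤ 2ε² A` on every `[0, t]`.
So `S ≤ 4ε² A`, which together with `4ε max(-λ, 0) < 1` yields `A ≤ 0`, and then `g = 0`. -/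

open Set MeasureTheory Real
open scoped RealInnerProductSpace

section InnerProductSpace

variable {H : Type*} [NormedAddCommGroup H] [InnerProductSpace ℝ H]

theorem intervalIntegrable_exp_mul {ε T : ℝ} (hT : 0 ≤ T) {f : ℝ → ℝ}
    (hf : ContinuousOn f (Icc 0 T)) :
    IntervalIntegrable (fun t => exp (-t / ε) * f t) volume 0 T :=
  ContinuousOn.intervalIntegrable (by rw [uIcc_of_le hT]; fun_prop)

theorem norm_sq_sub_two_mul_inner_ge (ε : ℝ) (x y : H) :
    ‖x‖ ^ 2 / 2 - 2 * ε ^ 2 * ‖y‖ ^ 2 ≤ ‖x‖ ^ 2 - 2 * ε * ⟪x, y⟫ := by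
  have h := norm_sub_sq_real x ((2 * ε) • y)
  rw [inner_smul_right, norm_smul, mul_pow, Real.norm_eq_abs, sq_abs] at h
  nlinarith [sq_nonneg ‖x - (2 * ε) • y‖]

theorem exp_mul_norm_sq_add_integral_le {ε T : ℝ} (hε : ε ≠ 0) (hT : 0 ≤ T) {g g' : ℝ → H}
    (hgc : ContinuousOn g (Icc 0 T)) (hg'c : ContinuousOn g' (Icc 0 T))
    (hg : ∀ t ∈ Ioo 0 T, HasDerivAt g (g' t) t) (hg0 : g 0 = 0) :
    ε * exp (-T / ε) * ‖g T‖ ^ 2 + (∫ t in (0 : ℝ)..T, exp (-t / ε) * ‖g t‖ ^ 2) / 2 ≤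
      2 * ε ^ 2 * ∫ t in (0 : ℝ)..T, exp (-t / ε) * ‖g' t‖ ^ 2 := by
  have hderiv : ∀ t ∈ Ioo 0 T, HasDerivAt (fun s => -(ε * exp (-s / ε) * ‖g s‖ ^ 2))
      (exp (-t / ε) * (‖g t‖ ^ 2 - 2 * ε * ⟪g t, g' t⟫)) t := by
    intro t ht
    refine (((((hasDerivAt_neg t).div_const ε).exp.const_mul ε).mul
      (hg t ht).norm_sq).neg).congr_deriv ?_
    field_simp
    ring
  have hftc := intervalIntegral.integral_eq_sub_of_hasDerivAt_of_le hT (by fun_prop) hderiv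
    (intervalIntegrable_exp_mul hT (by fun_prop))
  have hint : IntervalIntegrable (fun t => exp (-t / ε) * ‖g t‖ ^ 2) volume 0 T :=
    intervalIntegrable_exp_mul hT (by fun_prop)
  have hint' : IntervalIntegrable (fun t => exp (-t / ε) * ‖g' t‖ ^ 2) volume 0 T :=
    intervalIntegrable_exp_mul hT (by fun_prop)
  have hmono : ∫ t in (0 : ℝ)..T,
      (exp (-t / ε) * ‖g t‖ ^ 2 / 2 - 2 * ε ^ 2 * (exp (-t / ε) * ‖g' t‖ ^ 2)) ≤
      ∫ t in (0 : ℝ)..T, exp (-t / ε) * (‖g t‖ ^ 2 - 2 * ε * ⟪g t, g' t⟫) := by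
    refine intervalIntegral.integral_mono_on hT ((hint.div_const 2).sub (hint'.const_mul _))
      (intervalIntegrable_exp_mul hT (by fun_prop)) fun t _ => ?_
    have := mul_le_mul_of_nonneg_left (norm_sq_sub_two_mul_inner_ge ε (g t) (g' t))
      (exp_pos (-t / ε)).le
    linarith
  rw [hftc, intervalIntegral.integral_sub (hint.div_const 2) (hint'.const_mul _),
    intervalIntegral.integral_div, intervalIntegral.integral_const_mul] at hmono
  simp only [hg0, norm_zero] at hmono
  linarith

theorem integral_exp_mul_norm_sq_le {ε T : ℝ} (hε : 0 < ε) (hT : 0 ≤ T) {g g' : ℝ → H}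
    (hgc : ContinuousOn g (Icc 0 T)) (hg'c : ContinuousOn g' (Icc 0 T))
    (hg : ∀ t ∈ Ioo 0 T, HasDerivAt g (g' t) t) (hg0 : g 0 = 0) :
    ∫ t in (0 : ℝ)..T, exp (-t / ε) * ‖g t‖ ^ 2 ≤
      4 * ε ^ 2 * ∫ t in (0 : ℝ)..T, exp (-t / ε) * ‖g' t‖ ^ 2 := by
  have key := exp_mul_norm_sq_add_integral_le hε.ne' hT hgc hg'c hg hg0
  have : 0 ≤ ε * exp (-T / ε) * ‖g T‖ ^ 2 := by positivity
  linarith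

theorem eq_zero_of_integral_exp_mul_norm_sq_deriv_nonpos {ε T : ℝ} (hε : 0 < ε) {g g' : ℝ → H}
    (hgc : ContinuousOn g (Icc 0 T)) (hg'c : ContinuousOn g' (Icc 0 T))
    (hg : ∀ t ∈ Ioo 0 T, HasDerivAt g (g' t) t) (hg0 : g 0 = 0)
    (hA : ∫ t in (0 : ℝ)..T, exp (-t / ε) * ‖g' t‖ ^ 2 ≤ 0) :
    ∀ t ∈ Icc 0 T, g t = 0 := by
  intro t ht
  have hsub : Icc 0 t ⊆ Icc 0 T := Icc_subset_Icc_right ht.2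
  have key := exp_mul_norm_sq_add_integral_le hε.ne' ht.1 (hgc.mono hsub) (hg'c.mono hsub)
    (fun s hs => hg s (Ioo_subset_Ioo_right ht.2 hs)) hg0
  have hS : 0 ≤ ∫ s in (0 : ℝ)..t, exp (-s / ε) * ‖g s‖ ^ 2 :=
    intervalIntegral.integral_nonneg ht.1 fun s _ => by positivity
  have hA' : ∫ s in (0 : ℝ)..t, exp (-s / ε) * ‖g' s‖ ^ 2 ≤
      ∫ s in (0 : ℝ)..T, exp (-s / ε) * ‖g' s‖ ^ 2 :=
    intervalIntegral.integral_mono_interval le_rfl ht.1 ht.2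
      (Filter.Eventually.of_forall fun s => by positivity)
      (intervalIntegrable_exp_mul (ht.1.trans ht.2) (by fun_prop))
  have hpos : 0 < ε * exp (-t / ε) := by positivity
  have : ‖g t‖ ^ 2 ≤ 0 := nonpos_of_mul_nonpos_right (by nlinarith) hpos
  simpa using this

theorem norm_inv_two_smul_add_sq (x y : H) :
    ‖(2 : ℝ)⁻¹ • (x + y)‖ ^ 2 = ‖x‖ ^ 2 / 2 + ‖y‖ ^ 2 / 2 - ‖x - y‖ ^ 2 / 4 := by
  rw [norm_smul, mul_pow, norm_inv, Real.norm_ofNat]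
  linarith [parallelogram_law_with_norm ℝ x y]

theorem apply_inv_two_smul_add_le_of_convexOn_sub_sq {lam : ℝ} {E : H → ℝ}
    (hE : ConvexOn ℝ univ fun x => E x - (lam / 2) * ‖x‖ ^ 2) (x y : H) :
    E ((2 : ℝ)⁻¹ • (x + y)) ≤ E x / 2 + E y / 2 - lam / 8 * ‖x - y‖ ^ 2 := by
  have h := hE.2 (mem_univ x) (mem_univ y) (by norm_num : (0 : ℝ) ≤ 2⁻¹)
    (by norm_num : (0 : ℝ) ≤ 2⁻¹) (by norm_num)
  simp only [← smul_add, smul_eq_mul, norm_inv_two_smul_add_sq] at h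
  linarith

theorem continuous_of_convexOn_sub_sq [FiniteDimensional ℝ H] {lam : ℝ} {E : H → ℝ}
    (hE : ConvexOn ℝ univ fun x => E x - (lam / 2) * ‖x‖ ^ 2) : Continuous E := by
  have h := continuousOn_univ.1 (hE.continuousOn isOpen_univ)
  have hsplit : E = fun x => (E x - (lam / 2) * ‖x‖ ^ 2) + (lam / 2) * ‖x‖ ^ 2 := by
    ext; ring
  rw [hsplit]
  exact h.add (by fun_prop)

theorem lagrangian_inv_two_smul_add_le {ε lam : ℝ} {E : H → ℝ}
    (hE : ConvexOn ℝ univ fun x => E x - (lam / 2) * ‖x‖ ^ 2) (x y p q : H) :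
    ε / 2 * ‖(2 : ℝ)⁻¹ • (p + q)‖ ^ 2 + E ((2 : ℝ)⁻¹ • (x + y)) ≤
      (ε / 2 * ‖p‖ ^ 2 + E x) / 2 + (ε / 2 * ‖q‖ ^ 2 + E y) / 2 -
        (ε * ‖p - q‖ ^ 2 + lam * ‖x - y‖ ^ 2) / 8 := by
  rw [norm_inv_two_smul_add_sq]
  linarith [apply_inv_two_smul_add_le_of_convexOn_sub_sq hE x y]

theorem ContDiffOn.hasDerivAt_derivWithin_Icc {f : ℝ → H} {a b t : ℝ}
    (hf : ContDiffOn ℝ 1 f (Icc a b)) (ht : t ∈ Ioo a b) :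
    HasDerivAt f (derivWithin f (Icc a b) t) t :=
  (hf.differentiableOn one_ne_zero t (Ioo_subset_Icc_self ht)).hasDerivWithinAt.hasDerivAt
    (Icc_mem_nhds ht.1 ht.2)

noncomputable def wideFunctional (ε T : ℝ) (E : H → ℝ) (w : ℝ → H) : ℝ :=
  ∫ t in (0 : ℝ)..T, exp (-t / ε) * (ε / 2 * ‖derivWithin w (Icc 0 T) t‖ ^ 2 + E (w t))

theorem wideFunctional_inv_two_smul_add_le {ε T lam : ℝ} (hT : 0 < T) {E : H → ℝ}
    (hEc : Continuous E) (hE : ConvexOn ℝ univ fun x => E x - (lam / 2) * ‖x‖ ^ 2)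
    {u v : ℝ → H} (hu : ContDiffOn ℝ 1 u (Icc 0 T)) (hv : ContDiffOn ℝ 1 v (Icc 0 T)) :
    wideFunctional ε T E (fun t => (2 : ℝ)⁻¹ • (u t + v t)) ≤
      (wideFunctional ε T E u + wideFunctional ε T E v) / 2 -
        (ε * (∫ t in (0 : ℝ)..T, exp (-t / ε) *
            ‖derivWithin u (Icc 0 T) t - derivWithin v (Icc 0 T) t‖ ^ 2) +
          lam * ∫ t in (0 : ℝ)..T, exp (-t / ε) * ‖u t - v t‖ ^ 2) / 8 := by
  set u' := derivWithin u (Icc 0 T)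
  set v' := derivWithin v (Icc 0 T)
  have hm := (hu.add hv).const_smul (2 : ℝ)⁻¹
  have hm' : ∀ t ∈ Icc 0 T, derivWithin (fun t => (2 : ℝ)⁻¹ • (u t + v t)) (Icc 0 T) t =
      (2 : ℝ)⁻¹ • (u' t + v' t) := fun t ht =>
    (((hu.differentiableOn one_ne_zero t ht).hasDerivWithinAt.add
      (hv.differentiableOn one_ne_zero t ht).hasDerivWithinAt).const_smul
        (2 : ℝ)⁻¹).derivWithin (uniqueDiffOn_Icc hT t ht)
  have huc := hu.continuousOn
  have hvc := hv.continuousOn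
  have hu'c := hu.continuousOn_derivWithin (uniqueDiffOn_Icc hT) le_rfl
  have hv'c := hv.continuousOn_derivWithin (uniqueDiffOn_Icc hT) le_rfl
  have hm'c := hm.continuousOn_derivWithin (uniqueDiffOn_Icc hT) le_rfl
  have hX : IntervalIntegrable (fun t => exp (-t / ε) * (ε / 2 * ‖u' t‖ ^ 2 + E (u t)))
      volume 0 T := intervalIntegrable_exp_mul hT.le (by fun_prop)
  have hY : IntervalIntegrable (fun t => exp (-t / ε) * (ε / 2 * ‖v' t‖ ^ 2 + E (v t)))
      volume 0 T := intervalIntegrable_exp_mul hT.le (by fun_prop)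
  have hA : IntervalIntegrable (fun t => exp (-t / ε) * ‖u' t - v' t‖ ^ 2) volume 0 T :=
    intervalIntegrable_exp_mul hT.le (by fun_prop)
  have hS : IntervalIntegrable (fun t => exp (-t / ε) * ‖u t - v t‖ ^ 2) volume 0 T :=
    intervalIntegrable_exp_mul hT.le (by fun_prop)
  calc wideFunctional ε T E (fun t => (2 : ℝ)⁻¹ • (u t + v t))
      ≤ ∫ t in (0 : ℝ)..T, ((exp (-t / ε) * (ε / 2 * ‖u' t‖ ^ 2 + E (u t)) +
          exp (-t / ε) * (ε / 2 * ‖v' t‖ ^ 2 + E (v t))) / 2 -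
          (ε * (exp (-t / ε) * ‖u' t - v' t‖ ^ 2) +
            lam * (exp (-t / ε) * ‖u t - v t‖ ^ 2)) / 8) := by
        refine intervalIntegral.integral_mono_on hT.le
          (intervalIntegrable_exp_mul hT.le (by fun_prop))
          (((hX.add hY).div_const 2).sub (((hA.const_mul ε).add (hS.const_mul lam)).div_const 8))
          fun t ht => ?_
        rw [hm' t ht]
        have := mul_le_mul_of_nonneg_left
          (lagrangian_inv_two_smul_add_le (ε := ε) hE (u t) (v t) (u' t) (v' t))
          (exp_pos (-t / ε)).le
        linarith
    _ = _ := by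
        rw [intervalIntegral.integral_sub ((hX.add hY).div_const 2)
            (((hA.const_mul ε).add (hS.const_mul lam)).div_const 8),
          intervalIntegral.integral_div, intervalIntegral.integral_div,
          intervalIntegral.integral_add hX hY,
          intervalIntegral.integral_add (hA.const_mul ε) (hS.const_mul lam),
          intervalIntegral.integral_const_mul, intervalIntegral.integral_const_mul]
        rfl

end InnerProductSpace

theorem nonpos_of_add_mul_nonpos {ε lam A S : ℝ} (hε : 0 < ε) (hsmall : 4 * ε * max (-lam) 0 < 1)
    (hS : 0 ≤ S) (hSA : S ≤ 4 * ε ^ 2 * A) (h : ε * A + lam * S ≤ 0) : A ≤ 0 := by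
  rcases le_or_gt 0 lam with hlam | hlam
  · nlinarith [mul_nonneg hlam hS]
  · rw [max_eq_left (by linarith)] at hsmall
    have hpos : 0 < ε * (1 + 4 * ε * lam) := mul_pos hε (by linarith)
    refine nonpos_of_mul_nonpos_right ?_ hpos
    nlinarith [mul_le_mul_of_nonneg_left hSA (neg_nonneg.2 hlam.le)]

theorem wide_minimizer_unique_lambda_convex (d : ℕ) (lam : ℝ)
    (E : EuclideanSpace ℝ (Fin d) → ℝ)
    (hlam : ConvexOn ℝ Set.univ fun x => E x - (lam / 2) * ‖x‖ ^ 2)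
    (T ε : ℝ) (hT : 0 < T) (hε : 0 < ε) (hsmall : 4 * ε * max (-lam) 0 < 1)
    (a : EuclideanSpace ℝ (Fin d))
    (u v : ℝ → EuclideanSpace ℝ (Fin d))
    (hu : ContDiffOn ℝ 1 u (Set.Icc 0 T)) (hv : ContDiffOn ℝ 1 v (Set.Icc 0 T))
    (hu0 : u 0 = a) (hv0 : v 0 = a)
    (humin : ∀ w : ℝ → EuclideanSpace ℝ (Fin d), ContDiffOn ℝ 1 w (Set.Icc 0 T) →
      w 0 = a →
      (∫ t in (0 : ℝ)..T, Real.exp (-t / ε) *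
          ((ε / 2) * ‖derivWithin u (Set.Icc 0 T) t‖ ^ 2 + E (u t)))
        ≤ ∫ t in (0 : ℝ)..T, Real.exp (-t / ε) *
          ((ε / 2) * ‖derivWithin w (Set.Icc 0 T) t‖ ^ 2 + E (w t)))
    (hvmin : ∀ w : ℝ → EuclideanSpace ℝ (Fin d), ContDiffOn ℝ 1 w (Set.Icc 0 T) →
      w 0 = a →
      (∫ t in (0 : ℝ)..T, Real.exp (-t / ε) *
          ((ε / 2) * ‖derivWithin v (Set.Icc 0 T) t‖ ^ 2 + E (v t)))
        ≤ ∫ t in (0 : ℝ)..T, Real.exp (-t / ε) *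
          ((ε / 2) * ‖derivWithin w (Set.Icc 0 T) t‖ ^ 2 + E (w t))) :
    ∀ t ∈ Set.Icc (0 : ℝ) T, u t = v t := by
  have hmid := wideFunctional_inv_two_smul_add_le hT (continuous_of_convexOn_sub_sq hlam) hlam
    (ε := ε) hu hv
  set m := fun t => (2 : ℝ)⁻¹ • (u t + v t)
  have hm : ContDiffOn ℝ 1 m (Icc 0 T) := (hu.add hv).const_smul _
  have hm0 : m 0 = a := by simp only [m, hu0, hv0, ← two_smul ℝ a, smul_smul]; norm_num
  have hWu : wideFunctional ε T E u ≤ wideFunctional ε T E m := humin m hm hm0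
  have hWv : wideFunctional ε T E v ≤ wideFunctional ε T E m := hvmin m hm hm0
  have hg : ∀ t ∈ Ioo 0 T, HasDerivAt (fun t => u t - v t)
      (derivWithin u (Icc 0 T) t - derivWithin v (Icc 0 T) t) t := fun t ht =>
    (hu.hasDerivAt_derivWithin_Icc ht).sub (hv.hasDerivAt_derivWithin_Icc ht)
  have hgc : ContinuousOn (fun t => u t - v t) (Icc 0 T) := hu.continuousOn.sub hv.continuousOn
  have hg'c : ContinuousOn (fun t => derivWithin u (Icc 0 T) t - derivWithin v (Icc 0 T) t)
      (Icc 0 T) := (hu.continuousOn_derivWithin (uniqueDiffOn_Icc hT) le_rfl).sub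
    (hv.continuousOn_derivWithin (uniqueDiffOn_Icc hT) le_rfl)
  have hg0 : u 0 - v 0 = 0 := by rw [hu0, hv0, sub_self]
  have hA := nonpos_of_add_mul_nonpos hε hsmall
    (intervalIntegral.integral_nonneg hT.le fun t _ => by positivity)
    (integral_exp_mul_norm_sq_le hε hT.le hgc hg'c hg hg0)
    (by linarith [hWu, hWv, hmid])
  exact fun t ht => sub_eq_zero.1
    (eq_zero_of_integral_exp_mul_norm_sq_deriv_nonpos hε hgc hg'c hg hg0 hA t ht)
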